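/- Let F be a map on functions Q : X × U → ℝ (X, U finite) defined by F[Q](x,u) = max{B(x), D(x,u) + Σ_{x'} P(x'|x,u) · min_{u' ∈ U(x')} Q(x',u')}, where the weight ξ > 0 satisfies Σ_{x'} P(x'|x,u) ξ(x') ≤ β ξ(x) with β ∈ (0,1). Then F is a β-contraction in the norm ‖Q‖_ξ = max_{x,u} |Q(x,u)|/ξ(x), and hence has a unique fixed point Q*. -/
import Mathlib


open Finset

lemma abs_inf'_sub_inf'_le {ι : Type*} (s : Finset ι) (hs : s.Nonempty) (f g : ι → ℝ) :
    |s.inf' hs f - s.inf' hs g| ≤ s.sup' hs (fun i => |f i - g i|) := by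
  rw [abs_sub_le_iff]
  constructor
  · obtain ⟨i, hi, hig⟩ := s.exists_mem_eq_inf' hs g
    calc s.inf' hs f - s.inf' hs g ≤ f i - g i := by
          rw [hig]; exact sub_le_sub_right (s.inf'_le f hi) _
      _ ≤ |f i - g i| := le_abs_self _
      _ ≤ _ := s.le_sup' (fun i => |f i - g i|) hi
  · obtain ⟨i, hi, hif⟩ := s.exists_mem_eq_inf' hs f
    calc s.inf' hs g - s.inf' hs f ≤ g i - f i := by
          rw [hif]; exact sub_le_sub_right (s.inf'_le g hi) _
      _ ≤ |f i - g i| := by rw [abs_sub_comm]; exact le_abs_self _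
      _ ≤ _ := s.le_sup' (fun i => |f i - g i|) hi


/-- The state-action (Q-function) Bellman operator
`F[Q](x,u) = max {B x, D x u + Σ_{x'} P x u x' * min_{u'∈U(x')} Q x' u'}`
is a β-contraction in the weighted sup-norm `‖Q‖_ξ = max_{x,u} |Q x u|/ξ x`,
hence has a unique fixed point. -/
theorem q_bellman_operator_contraction
    {X U : Type*} [Fintype X] [Nonempty X] [Fintype U] [Nonempty U] [DecidableEq U]
    (Uadm : X → Finset U) (hUadm : ∀ x, (Uadm x).Nonempty)
    (P : X → U → X → ℝ) (hP : ∀ x u x', 0 ≤ P x u x')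
    (D : X → U → ℝ) (B : X → ℝ)
    (ξ : X → ℝ) (hξ : ∀ x, 0 < ξ x) (β : ℝ) (hβ0 : 0 < β) (hβ1 : β < 1)
    (hdisc : ∀ x u, ∑ x', P x u x' * ξ x' ≤ β * ξ x)
    (F : (X → U → ℝ) → (X → U → ℝ))
    (hF : ∀ Q x u, F Q x u =
      max (B x) (D x u + ∑ x', P x u x' * (Uadm x').inf' (hUadm x') (Q x'))) :
    (∀ Q₁ Q₂ : X → U → ℝ,
      Finset.univ.sup' Finset.univ_nonempty
          (fun p : X × U => |F Q₁ p.1 p.2 - F Q₂ p.1 p.2| / ξ p.1)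
        ≤ β * Finset.univ.sup' Finset.univ_nonempty
          (fun p : X × U => |Q₁ p.1 p.2 - Q₂ p.1 p.2| / ξ p.1)) ∧
    (∃! Qstar : X → U → ℝ, F Qstar = Qstar) := by
  set K : (X → U → ℝ) → (X → U → ℝ) → ℝ := fun Q₁ Q₂ =>
    Finset.univ.sup' Finset.univ_nonempty
      (fun p : X × U => |Q₁ p.1 p.2 - Q₂ p.1 p.2| / ξ p.1) with hKdef
  have hK0 : ∀ Q₁ Q₂, 0 ≤ K Q₁ Q₂ := by
    intro Q₁ Q₂
    obtain ⟨p⟩ : Nonempty (X × U) := inferInstance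
    refine le_trans ?_ (Finset.le_sup' (fun p : X × U => |Q₁ p.1 p.2 - Q₂ p.1 p.2| / ξ p.1)
      (Finset.mem_univ p))
    exact div_nonneg (abs_nonneg _) (hξ p.1).le
  have hQ : ∀ Q₁ Q₂ (x : X) (u : U), |Q₁ x u - Q₂ x u| ≤ K Q₁ Q₂ * ξ x := by
    intro Q₁ Q₂ x u
    have := Finset.le_sup' (fun p : X × U => |Q₁ p.1 p.2 - Q₂ p.1 p.2| / ξ p.1)
      (Finset.mem_univ (x, u))
    exact (div_le_iff₀ (hξ x)).mp this
  have key : ∀ Q₁ Q₂ (x : X) (u : U),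
      |F Q₁ x u - F Q₂ x u| ≤ β * K Q₁ Q₂ * ξ x := by
    intro Q₁ Q₂ x u
    rw [hF, hF]
    have h1 : |max (B x) (D x u + ∑ x', P x u x' * (Uadm x').inf' (hUadm x') (Q₁ x'))
        - max (B x) (D x u + ∑ x', P x u x' * (Uadm x').inf' (hUadm x') (Q₂ x'))|
        ≤ |(D x u + ∑ x', P x u x' * (Uadm x').inf' (hUadm x') (Q₁ x'))
          - (D x u + ∑ x', P x u x' * (Uadm x').inf' (hUadm x') (Q₂ x'))| := by
      rw [max_comm (B x), max_comm (B x)]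
      exact abs_max_sub_max_le_abs _ _ _
    refine h1.trans ?_
    rw [add_sub_add_left_eq_sub, ← Finset.sum_sub_distrib]
    calc |∑ x', (P x u x' * (Uadm x').inf' (hUadm x') (Q₁ x')
            - P x u x' * (Uadm x').inf' (hUadm x') (Q₂ x'))|
        ≤ ∑ x', |P x u x' * (Uadm x').inf' (hUadm x') (Q₁ x')
            - P x u x' * (Uadm x').inf' (hUadm x') (Q₂ x')| := Finset.abs_sum_le_sum_abs _ _
      _ ≤ ∑ x', P x u x' * (K Q₁ Q₂ * ξ x') := by
          refine Finset.sum_le_sum fun x' _ => ?_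
          rw [← mul_sub, abs_mul, abs_of_nonneg (hP x u x')]
          refine mul_le_mul_of_nonneg_left ?_ (hP x u x')
          refine (abs_inf'_sub_inf'_le _ (hUadm x') _ _).trans ?_
          exact Finset.sup'_le _ _ fun u' _ => hQ Q₁ Q₂ x' u'
      _ = K Q₁ Q₂ * ∑ x', P x u x' * ξ x' := by
          rw [Finset.mul_sum]; congr 1; ext x'; ring
      _ ≤ K Q₁ Q₂ * (β * ξ x) := mul_le_mul_of_nonneg_left (hdisc x u) (hK0 _ _)
      _ = β * K Q₁ Q₂ * ξ x := by ring
  have part1 : ∀ Q₁ Q₂ : X → U → ℝ,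
      Finset.univ.sup' Finset.univ_nonempty
          (fun p : X × U => |F Q₁ p.1 p.2 - F Q₂ p.1 p.2| / ξ p.1)
        ≤ β * K Q₁ Q₂ := by
    intro Q₁ Q₂
    refine Finset.sup'_le _ _ fun p _ => ?_
    exact (div_le_iff₀ (hξ p.1)).mpr (key Q₁ Q₂ p.1 p.2)
  refine ⟨part1, ?_⟩
  -- existence via contraction on the conjugated operator
  set T : (X × U → ℝ) → (X × U → ℝ) := fun q p =>
    F (fun x u => q (x, u) * ξ x) p.1 p.2 / ξ p.1 with hTdef
  have hKd : ∀ q₁ q₂ : X × U → ℝ,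
      K (fun x u => q₁ (x, u) * ξ x) (fun x u => q₂ (x, u) * ξ x) ≤ dist q₁ q₂ := by
    intro q₁ q₂
    refine Finset.sup'_le _ _ fun p _ => ?_
    have : |q₁ (p.1, p.2) * ξ p.1 - q₂ (p.1, p.2) * ξ p.1| / ξ p.1 = |q₁ p - q₂ p| := by
      rw [← sub_mul, abs_mul, abs_of_pos (hξ p.1), mul_div_cancel_right₀ _ (hξ p.1).ne']
    rw [this, ← Real.dist_eq]
    exact dist_le_pi_dist q₁ q₂ p
  have hlip : LipschitzWith β.toNNReal T := by
    refine LipschitzWith.of_dist_le_mul fun q₁ q₂ => ?_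
    rw [Real.coe_toNNReal _ hβ0.le]
    refine (dist_pi_le_iff (by positivity)).mpr fun p => ?_
    have h1 : dist (T q₁ p) (T q₂ p)
        = |F (fun x u => q₁ (x, u) * ξ x) p.1 p.2 - F (fun x u => q₂ (x, u) * ξ x) p.1 p.2|
          / ξ p.1 := by
      rw [Real.dist_eq, hTdef, ← sub_div, abs_div, abs_of_pos (hξ p.1)]
    rw [h1]
    refine (div_le_iff₀ (hξ p.1)).mpr ?_
    refine (key _ _ p.1 p.2).trans ?_
    exact mul_le_mul_of_nonneg_right
      (mul_le_mul_of_nonneg_left (hKd q₁ q₂) hβ0.le) (hξ p.1).le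
  have hcon : ContractingWith β.toNNReal T := by
    refine ⟨?_, hlip⟩
    rw [← NNReal.coe_lt_coe, Real.coe_toNNReal _ hβ0.le]
    exact hβ1
  set q : X × U → ℝ := ContractingWith.fixedPoint T hcon with hqdef
  have hq : T q = q := ContractingWith.fixedPoint_isFixedPt hcon
  refine ⟨fun x u => q (x, u) * ξ x, ?_, ?_⟩
  · funext x u
    have h1 : T q (x, u) = q (x, u) := congrFun hq (x, u)
    have h2 : F (fun x u => q (x, u) * ξ x) x u / ξ x = q (x, u) := h1
    calc F (fun x u => q (x, u) * ξ x) x u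
        = (F (fun x u => q (x, u) * ξ x) x u / ξ x) * ξ x := by
          rw [div_mul_cancel₀ _ (hξ x).ne']
      _ = q (x, u) * ξ x := by rw [h2]
  · intro Q' hQ'
    set Qs : X → U → ℝ := fun x u => q (x, u) * ξ x with hQs
    have hQsfix : F Qs = Qs := by
      funext x u
      have h2 : F Qs x u / ξ x = q (x, u) := congrFun hq (x, u)
      calc F Qs x u = (F Qs x u / ξ x) * ξ x := by rw [div_mul_cancel₀ _ (hξ x).ne']
        _ = q (x, u) * ξ x := by rw [h2]
    have hS := part1 Q' Qs
    rw [hQ', hQsfix] at hS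
    have hS0 : K Q' Qs ≤ 0 := by nlinarith [hK0 Q' Qs]
    funext x u
    have h1 : |Q' x u - Qs x u| / ξ x ≤ K Q' Qs :=
      Finset.le_sup' (fun p : X × U => |Q' p.1 p.2 - Qs p.1 p.2| / ξ p.1) (Finset.mem_univ (x, u))
    have h2 : |Q' x u - Qs x u| ≤ 0 := by
      have := (div_le_iff₀ (hξ x)).mp (h1.trans hS0)
      linarith
    have := le_antisymm h2 (abs_nonneg _)
    have := abs_eq_zero.mp this
    linarith [sub_eq_zero.mp this]
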